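/- arXiv:1411.1648 — 4 statements merged into one kernel-verified Lean document; each statement's English description precedes it below -/
import Mathlib

section
/- If ω is a radial weight on the unit disc such that there exists C ≥ 1 with ŵ(r) ≤ C·ŵ((1+r)/2) for all 0 ≤ r < 1 (where ŵ(r) = ∫_r^1 ω(s) ds), then there exist constants C' > 0 and β > 0 such that ŵ(r) ≤ C'·((1-r)/(1-t))^β · ŵ(t) for all 0 ≤ r ≤ t < 1. -/
open MeasureTheory Set

/-!
Iterating the doubling inequality (with constant `D > 1`) `n` times gives
`ŵ(r) ≤ D ^ n ŵ(1 - (1 - r) / 2 ^ n)`.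
Choosing `n` with `(1 - r) / (1 - t) ≤ 2 ^ n < 2 (1 - r) / (1 - t)` and using that `ŵ` is
nonincreasing turns this into `ŵ(r) ≤ D ((1 - r) / (1 - t)) ^ β ŵ(t)` with `β = log₂ D`.
-/

namespace Real

theorem exists_nat_le_two_pow_and_pow_le_mul_rpow_logb {x D : ℝ} (hx : 1 ≤ x) (hD : 1 ≤ D) :
    ∃ n : ℕ, x ≤ 2 ^ n ∧ D ^ n ≤ D * x ^ logb 2 D := by
  obtain ⟨m, hm_le, hm_lt⟩ := exists_nat_pow_near hx one_lt_two
  refine ⟨m + 1, hm_lt.le, ?_⟩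
  have h2D : (2 : ℝ) ^ logb 2 D = D := rpow_logb two_pos (by norm_num) (by linarith)
  calc D ^ (m + 1) = ((2 : ℝ) ^ (m + 1)) ^ logb 2 D := by
        rw [← rpow_pow_comm zero_le_two, h2D]
    _ ≤ (2 * x) ^ logb 2 D := by
        gcongr
        · exact logb_nonneg one_lt_two hD
        · rw [pow_succ']
          exact mul_le_mul_of_nonneg_left hm_le zero_le_two
    _ = D * x ^ logb 2 D := by
        rw [mul_rpow zero_le_two (zero_le_one.trans hx), h2D]

end Real

section Doubling

variable {W : ℝ → ℝ} {D : ℝ}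

theorem le_pow_mul_of_le_mul_midpoint (hD : 0 ≤ D)
    (hW : ∀ r, 0 ≤ r → r < 1 → W r ≤ D * W ((1 + r) / 2)) (n : ℕ) {r : ℝ} (hr₀ : 0 ≤ r)
    (hr₁ : r < 1) : W r ≤ D ^ n * W (1 - (1 - r) / 2 ^ n) := by
  induction n generalizing r with
  | zero => simp
  | succ n ih =>
    have hmid : 1 - (1 - (1 + r) / 2) / 2 ^ n = 1 - (1 - r) / 2 ^ (n + 1) := by
      field_simp
      ring
    calc W r ≤ D * W ((1 + r) / 2) := hW r hr₀ hr₁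
      _ ≤ D * (D ^ n * W (1 - (1 - r) / 2 ^ (n + 1))) := by
          rw [← hmid]
          exact mul_le_mul_of_nonneg_left (ih (by linarith) (by linarith)) hD
      _ = D ^ (n + 1) * W (1 - (1 - r) / 2 ^ (n + 1)) := by ring

theorem le_mul_div_rpow_logb_mul_of_le_mul_midpoint (hD : 1 < D)
    (hW : ∀ r, 0 ≤ r → r < 1 → W r ≤ D * W ((1 + r) / 2))
    (hW_anti : AntitoneOn W (Ico 0 1)) (hW_nonneg : ∀ t ∈ Ico (0 : ℝ) 1, 0 ≤ W t)
    {r t : ℝ} (hr : 0 ≤ r) (hrt : r ≤ t) (ht : t < 1) :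
    W r ≤ D * ((1 - r) / (1 - t)) ^ Real.logb 2 D * W t := by
  have h1t : 0 < 1 - t := by linarith
  have h1r : 0 < 1 - r := by linarith
  have hx : 1 ≤ (1 - r) / (1 - t) := by rw [le_div_iff₀ h1t]; linarith
  obtain ⟨n, hn_le, hn_pow⟩ :=
    Real.exists_nat_le_two_pow_and_pow_le_mul_rpow_logb hx hD.le
  have hstep : (1 - r) / 2 ^ n ≤ 1 - t := by
    rw [div_le_iff₀ h1t] at hn_le
    rw [div_le_iff₀ (by positivity)]
    linarith
  have hpos : 0 < (1 - r) / 2 ^ n := by positivity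
  have hWt : W (1 - (1 - r) / 2 ^ n) ≤ W t :=
    hW_anti ⟨hr.trans hrt, ht⟩ ⟨by linarith, by linarith⟩ (by linarith)
  calc W r ≤ D ^ n * W (1 - (1 - r) / 2 ^ n) :=
        le_pow_mul_of_le_mul_midpoint (by linarith) hW n hr (hrt.trans_lt ht)
    _ ≤ D ^ n * W t := by gcongr
    _ ≤ D * ((1 - r) / (1 - t)) ^ Real.logb 2 D * W t := by
        gcongr
        exact hW_nonneg t ⟨hr.trans hrt, ht⟩

end Doubling

namespace intervalIntegral

variable {ω : ℝ → ℝ} {a b : ℝ}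

theorem integral_nonneg_of_forall_mem_Ioo (hab : a ≤ b) (hω : ∀ s ∈ Ioo a b, 0 ≤ ω s) :
    0 ≤ ∫ s in a..b, ω s := by
  rw [integral_of_le hab, integral_Ioc_eq_integral_Ioo]
  exact setIntegral_nonneg measurableSet_Ioo hω

theorem antitoneOn_integral_of_nonneg (hint : IntegrableOn ω (Ico a b))
    (hω : ∀ s ∈ Ico a b, 0 ≤ ω s) : AntitoneOn (fun r ↦ ∫ s in r..b, ω s) (Icc a b) := by
  intro u hu v hv huv
  have hint' : IntegrableOn ω (Icc a b) := (integrableOn_Icc_iff_integrableOn_Ico).mpr hint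
  have hII : ∀ x ∈ Icc a b, ∀ y ∈ Icc a b, IntervalIntegrable ω volume x y := fun x hx y hy ↦
    (hint'.mono_set (uIcc_subset_Icc hx hy)).intervalIntegrable
  have hsplit :=
    integral_add_adjacent_intervals (hII u hu v hv) (hII v hv b ⟨hv.1.trans hv.2, le_rfl⟩)
  have huv_nonneg : 0 ≤ ∫ s in u..v, ω s :=
    integral_nonneg_of_forall_mem_Ioo huv fun s hs ↦ hω s ⟨hu.1.trans hs.1.le, hs.2.trans_le hv.2⟩
  linarith

end intervalIntegral

/-- A radial doubling weight satisfies the power-type doubling estimate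
ŵ(r) ≤ C'·((1-r)/(1-t))^β·ŵ(t) for 0 ≤ r ≤ t < 1. -/
theorem stmt0 (ω : ℝ → ℝ) (hpos : ∀ s ∈ Set.Ico (0:ℝ) 1, 0 ≤ ω s)
    (hint : MeasureTheory.IntegrableOn ω (Set.Ico 0 1))
    (C : ℝ) (hC : 1 ≤ C)
    (hdbl : ∀ r : ℝ, 0 ≤ r → r < 1 →
      (∫ s in r..1, ω s) ≤ C * ∫ s in ((1 + r) / 2)..1, ω s) :
    ∃ C' > (0:ℝ), ∃ β > (0:ℝ), ∀ r t : ℝ, 0 ≤ r → r ≤ t → t < 1 →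
      (∫ s in r..1, ω s) ≤ C' * ((1 - r) / (1 - t)) ^ β * ∫ s in t..1, ω s := by
  have htail_nonneg : ∀ t ∈ Ico (0 : ℝ) 1, 0 ≤ ∫ s in t..1, ω s := fun t ht ↦
    intervalIntegral.integral_nonneg_of_forall_mem_Ioo ht.2.le
      fun s hs ↦ hpos s ⟨ht.1.trans hs.1.le, hs.2⟩
  have htail_anti : AntitoneOn (fun r ↦ ∫ s in r..1, ω s) (Ico 0 1) :=
    (intervalIntegral.antitoneOn_integral_of_nonneg hint hpos).mono Ico_subset_Icc_self
  -- `C` itself may equal `1`, which would give the exponent `log₂ C = 0`.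
  have hdbl' : ∀ r, 0 ≤ r → r < 1 →
      (∫ s in r..1, ω s) ≤ (C + 1) * ∫ s in ((1 + r) / 2)..1, ω s := fun r hr hr₁ ↦
    (hdbl r hr hr₁).trans <| by
      gcongr
      · exact htail_nonneg _ ⟨by linarith, by linarith⟩
      · linarith
  refine ⟨C + 1, by linarith, Real.logb 2 (C + 1), Real.logb_pos one_lt_two (by linarith),
    fun r t hr hrt ht ↦ ?_⟩
  exact le_mul_div_rpow_logb_mul_of_le_mul_midpoint (by linarith) hdbl' htail_anti htail_nonneg
    hr hrt ht
end

section
/- Let ω be a radial weight with ŵ(r) = ∫_r^1 ω(s) ds satisfying the doubling condition ŵ(r) ≤ C·ŵ((1+r)/2). Then there exist constants C' > 0 and γ₀ > 0 such that for all γ ≥ γ₀ and all 0 ≤ t < 1, ∫_0^t ((1-t)/(1-s))^γ ω(s) ds ≤ C'·ŵ(t). -/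
/-!
Write `t' = 2t - 1`, so that `(1 + t') / 2 = t` and `(1 - t) / (1 - s) = ½ · (1 - t') / (1 - s)`.
Splitting the integral at `t'`, the piece over `[0, t']` is `2^{-γ}` times the same integral
at `t'`, and the piece over `[t', t]` is at most `ŵ(t')` because the kernel is at most `1`.
Once `2^γ ≥ 2C`, the bound `∫_0^t ≤ 2C ŵ(t)` therefore passes from `t'` to `t` through the
doubling inequality `ŵ(t') ≤ C ŵ(t)`. For `t ≤ 1/2` it follows from `ŵ(0) ≤ C ŵ(1/2)`, and every
`t < 1` is reached from `[0, 1/2]` by finitely many steps `t' ↦ (1 + t') / 2`.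
-/

open MeasureTheory Set

theorem forall_Ico_of_le_half_of_step {P : ℝ → Prop} (base : ∀ t, 0 ≤ t → t ≤ 1 / 2 → P t)
    (step : ∀ t, 1 / 2 < t → t < 1 → P (2 * t - 1) → P t) :
    ∀ t, 0 ≤ t → t < 1 → P t := by
  have key : ∀ n : ℕ, ∀ t, 0 ≤ t → t ≤ 1 - (1 / 2 : ℝ) ^ n → P t := by
    intro n
    induction n with
    | zero => exact fun t ht0 ht => base t ht0 (by norm_num at ht; linarith)
    | succ n ih =>
      intro t ht0 ht
      rcases le_or_gt t (1 / 2) with hle | hlt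
      · exact base t ht0 hle
      · have hpow : 0 < (1 / 2 : ℝ) ^ (n + 1) := by positivity
        rw [pow_succ] at ht hpow
        exact step t hlt (by linarith) (ih _ (by linarith) (by linarith))
  intro t ht0 ht1
  obtain ⟨n, hn⟩ := exists_pow_lt_of_lt_one (sub_pos.2 ht1) (by norm_num : (1 / 2 : ℝ) < 1)
  exact key n t ht0 (by linarith)

theorem half_rpow_mul_le_one_of_logb_le {x γ : ℝ} (hx : 0 < x) (hγ : Real.logb 2 x ≤ γ) :
    (1 / 2 : ℝ) ^ γ * x ≤ 1 := by
  rw [Real.logb_le_iff_le_rpow one_lt_two hx] at hγ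
  rw [Real.div_rpow zero_le_one zero_le_two, Real.one_rpow, one_div_mul_eq_div]
  exact div_le_one_of_le₀ hγ (by positivity)

noncomputable def tailIntegral (ω : ℝ → ℝ) (r : ℝ) : ℝ := ∫ s in r..1, ω s

noncomputable def kernelIntegral (ω : ℝ → ℝ) (γ t : ℝ) : ℝ :=
  ∫ s in (0 : ℝ)..t, ((1 - t) / (1 - s)) ^ γ * ω s

section Weight

variable {ω : ℝ → ℝ}

theorem intervalIntegrable_of_integrableOn_Ico (hint : IntegrableOn ω (Ico 0 1)) {a b : ℝ}
    (ha : 0 ≤ a) (hab : a ≤ b) (hb : b ≤ 1) : IntervalIntegrable ω volume a b :=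
  (((integrableOn_Icc_iff_integrableOn_Ico (f := ω)).2 hint).mono_set
    (by rw [uIcc_of_le hab]; exact Icc_subset_Icc ha hb)).intervalIntegrable

theorem intervalIntegral_nonneg_of_nonneg_Ico (hpos : ∀ s ∈ Ico (0 : ℝ) 1, 0 ≤ ω s) {a b : ℝ}
    (ha : 0 ≤ a) (hab : a ≤ b) (hb : b ≤ 1) : 0 ≤ ∫ s in a..b, ω s := by
  rw [intervalIntegral.integral_of_le hab, integral_Ioc_eq_integral_Ioo]
  exact setIntegral_nonneg measurableSet_Ioo fun s hs => hpos s ⟨ha.trans hs.1.le, hs.2.trans_le hb⟩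

theorem integral_add_tailIntegral (hint : IntegrableOn ω (Ico 0 1)) {a b : ℝ}
    (ha : 0 ≤ a) (hab : a ≤ b) (hb : b ≤ 1) :
    (∫ s in a..b, ω s) + tailIntegral ω b = tailIntegral ω a :=
  intervalIntegral.integral_add_adjacent_intervals
    (intervalIntegrable_of_integrableOn_Ico hint ha hab hb)
    (intervalIntegrable_of_integrableOn_Ico hint (ha.trans hab) hb le_rfl)

theorem tailIntegral_nonneg (hpos : ∀ s ∈ Ico (0 : ℝ) 1, 0 ≤ ω s) {r : ℝ} (hr0 : 0 ≤ r)
    (hr1 : r ≤ 1) : 0 ≤ tailIntegral ω r :=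
  intervalIntegral_nonneg_of_nonneg_Ico hpos hr0 hr1 le_rfl

theorem integral_le_tailIntegral (hpos : ∀ s ∈ Ico (0 : ℝ) 1, 0 ≤ ω s)
    (hint : IntegrableOn ω (Ico 0 1)) {a b : ℝ} (ha : 0 ≤ a) (hab : a ≤ b) (hb : b ≤ 1) :
    ∫ s in a..b, ω s ≤ tailIntegral ω a := by
  rw [← integral_add_tailIntegral hint ha hab hb]
  linarith [tailIntegral_nonneg hpos (ha.trans hab) hb]

theorem tailIntegral_le_of_le (hpos : ∀ s ∈ Ico (0 : ℝ) 1, 0 ≤ ω s)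
    (hint : IntegrableOn ω (Ico 0 1)) {a b : ℝ} (ha : 0 ≤ a) (hab : a ≤ b) (hb : b ≤ 1) :
    tailIntegral ω b ≤ tailIntegral ω a := by
  rw [← integral_add_tailIntegral hint ha hab hb]
  linarith [intervalIntegral_nonneg_of_nonneg_Ico hpos ha hab hb]

theorem intervalIntegrable_kernel_mul (hint : IntegrableOn ω (Ico 0 1)) {γ t a b : ℝ}
    (ha : 0 ≤ a) (hab : a ≤ b) (hbt : b ≤ t) (ht : t < 1) :
    IntervalIntegrable (fun s => ((1 - t) / (1 - s)) ^ γ * ω s) volume a b := by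
  have hsub : ∀ s ∈ uIcc a b, 1 - s ≠ 0 := fun s hs => by
    rw [uIcc_of_le hab] at hs
    linarith [hs.2]
  have hcont : ContinuousOn (fun s => ((1 - t) / (1 - s)) ^ γ) (uIcc a b) :=
    (continuousOn_const.div (continuousOn_const.sub continuousOn_id) hsub).rpow_const
      fun s hs => .inl (div_ne_zero (by linarith) (hsub s hs))
  exact (intervalIntegrable_of_integrableOn_Ico hint ha hab (by linarith)).continuousOn_mul hcont

theorem integral_kernel_mul_le (hpos : ∀ s ∈ Ico (0 : ℝ) 1, 0 ≤ ω s)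
    (hint : IntegrableOn ω (Ico 0 1)) {γ t a b : ℝ} (hγ : 0 ≤ γ)
    (ha : 0 ≤ a) (hab : a ≤ b) (hbt : b ≤ t) (ht : t < 1) :
    ∫ s in a..b, ((1 - t) / (1 - s)) ^ γ * ω s ≤ ∫ s in a..b, ω s := by
  refine intervalIntegral.integral_mono_on hab (intervalIntegrable_kernel_mul hint ha hab hbt ht)
    (intervalIntegrable_of_integrableOn_Ico hint ha hab (by linarith)) fun s hs => ?_
  have hst : s ≤ t := hs.2.trans hbt
  refine mul_le_of_le_one_left (hpos s ⟨ha.trans hs.1, by linarith⟩) ?_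
  exact Real.rpow_le_one (div_nonneg (by linarith) (by linarith))
    (div_le_one_of_le₀ (by linarith) (by linarith)) hγ

theorem integral_kernel_mul_eq_half_rpow_mul {γ t : ℝ} (ht0 : 1 / 2 ≤ t) (ht1 : t ≤ 1) :
    ∫ s in (0 : ℝ)..(2 * t - 1), ((1 - t) / (1 - s)) ^ γ * ω s
      = (1 / 2 : ℝ) ^ γ * kernelIntegral ω γ (2 * t - 1) := by
  rw [kernelIntegral, ← intervalIntegral.integral_const_mul]
  refine intervalIntegral.integral_congr fun s hs => ?_
  rw [uIcc_of_le (by linarith)] at hs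
  have hsplit : (1 - t) / (1 - s) = 1 / 2 * ((1 - (2 * t - 1)) / (1 - s)) := by ring
  rw [hsplit, Real.mul_rpow (by norm_num) (div_nonneg (by linarith [hs.2]) (by linarith [hs.2])),
    mul_assoc]

theorem kernelIntegral_le_half_rpow_mul_add_tailIntegral (hpos : ∀ s ∈ Ico (0 : ℝ) 1, 0 ≤ ω s)
    (hint : IntegrableOn ω (Ico 0 1)) {γ t : ℝ} (hγ : 0 ≤ γ) (ht0 : 1 / 2 < t) (ht1 : t < 1) :
    kernelIntegral ω γ t
      ≤ (1 / 2 : ℝ) ^ γ * kernelIntegral ω γ (2 * t - 1) + tailIntegral ω (2 * t - 1) := by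
  have h0 : (0 : ℝ) ≤ 2 * t - 1 := by linarith
  have hle : 2 * t - 1 ≤ t := by linarith
  rw [kernelIntegral, ← intervalIntegral.integral_add_adjacent_intervals
    (intervalIntegrable_kernel_mul hint le_rfl h0 hle ht1)
    (intervalIntegrable_kernel_mul hint h0 hle le_rfl ht1),
    integral_kernel_mul_eq_half_rpow_mul ht0.le ht1.le]
  gcongr
  exact (integral_kernel_mul_le hpos hint hγ h0 hle le_rfl ht1).trans
    (integral_le_tailIntegral hpos hint h0 hle ht1.le)

theorem kernelIntegral_le_two_mul_tailIntegral (hpos : ∀ s ∈ Ico (0 : ℝ) 1, 0 ≤ ω s)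
    (hint : IntegrableOn ω (Ico 0 1)) {C : ℝ} (hC : 0 ≤ C)
    (hdbl : ∀ r, 0 ≤ r → r < 1 → tailIntegral ω r ≤ C * tailIntegral ω ((1 + r) / 2))
    {γ : ℝ} (hγ0 : 0 ≤ γ) (hγ : (1 / 2 : ℝ) ^ γ * (2 * C) ≤ 1) :
    ∀ t, 0 ≤ t → t < 1 → kernelIntegral ω γ t ≤ 2 * C * tailIntegral ω t := by
  refine forall_Ico_of_le_half_of_step (fun t ht0 ht => ?_) (fun t ht0 ht1 ih => ?_)
  · calc kernelIntegral ω γ t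
        ≤ ∫ s in (0 : ℝ)..t, ω s :=
          integral_kernel_mul_le hpos hint hγ0 le_rfl ht0 le_rfl (by linarith)
      _ ≤ tailIntegral ω 0 := integral_le_tailIntegral hpos hint le_rfl ht0 (by linarith)
      _ ≤ C * tailIntegral ω ((1 + 0) / 2) := hdbl 0 le_rfl one_pos
      _ ≤ C * tailIntegral ω t := by
          gcongr
          exact tailIntegral_le_of_le hpos hint ht0 (by linarith) (by norm_num)
      _ ≤ 2 * C * tailIntegral ω t :=
          mul_le_mul_of_nonneg_right (by linarith) (tailIntegral_nonneg hpos ht0 (by linarith))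
  · have hdblt := hdbl (2 * t - 1) (by linarith) (by linarith)
    rw [show (1 + (2 * t - 1)) / 2 = t by ring] at hdblt
    have htail := tailIntegral_nonneg hpos (show 0 ≤ 2 * t - 1 by linarith) (by linarith)
    have hhalf : 0 ≤ (1 / 2 : ℝ) ^ γ := by positivity
    calc kernelIntegral ω γ t
        ≤ (1 / 2 : ℝ) ^ γ * kernelIntegral ω γ (2 * t - 1) + tailIntegral ω (2 * t - 1) :=
          kernelIntegral_le_half_rpow_mul_add_tailIntegral hpos hint hγ0 ht0 ht1
      _ ≤ (1 / 2 : ℝ) ^ γ * (2 * C * tailIntegral ω (2 * t - 1)) + tailIntegral ω (2 * t - 1) := by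
          gcongr
      _ ≤ 2 * tailIntegral ω (2 * t - 1) := by nlinarith
      _ ≤ 2 * C * tailIntegral ω t := by linarith

end Weight

/-- For a radial doubling weight ω there are C' > 0 and γ₀ > 0 such that
∫_0^t ((1-t)/(1-s))^γ ω(s) ds ≤ C'·ŵ(t) for all γ ≥ γ₀ and 0 ≤ t < 1. -/
theorem stmt2 (ω : ℝ → ℝ) (hpos : ∀ s ∈ Set.Ico (0:ℝ) 1, 0 ≤ ω s)
    (hint : MeasureTheory.IntegrableOn ω (Set.Ico 0 1))
    (C : ℝ) (hC : 1 ≤ C)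
    (hdbl : ∀ r : ℝ, 0 ≤ r → r < 1 →
      (∫ s in r..1, ω s) ≤ C * ∫ s in ((1 + r) / 2)..1, ω s) :
    ∃ C' > (0:ℝ), ∃ γ₀ > (0:ℝ), ∀ γ : ℝ, γ₀ ≤ γ → ∀ t : ℝ, 0 ≤ t → t < 1 →
      (∫ s in (0:ℝ)..t, ((1 - t) / (1 - s)) ^ γ * ω s) ≤ C' * ∫ s in t..1, ω s := by
  have hγ₀ : 0 < Real.logb 2 (2 * C) := Real.logb_pos one_lt_two (by linarith)
  refine ⟨2 * C, by linarith, Real.logb 2 (2 * C), hγ₀, fun γ hγ => ?_⟩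
  exact kernelIntegral_le_two_mul_tailIntegral hpos hint (by linarith) hdbl (by linarith)
    (half_rpow_mul_le_one_of_logb_le (by linarith) hγ)
end

section
/- Let f be analytic on 𝔻 and q ≥ 2. Then for fixed 0 < r < 1 and all z ∈ 𝔻, |f'(z)|^q (1-|z|²)^q ≲ ∫_{Δ(z,r)} Δ|f|^q(ζ) dA(ζ), where Δ|f|^q denotes the distributional Laplacian of |f|^q (which is q²|f|^{q-2}|f'|² and is subharmonic for q ≥ 2). -/
open MeasureTheory Set Metric Complex
open scoped ENNReal

noncomputable section

/-- Pseudohyperbolic disc Δ(z,r). -/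
def phDisc (z : ℂ) (r : ℝ) : Set ℂ :=
  {ζ | ‖ζ‖ < 1 ∧ ‖(z - ζ) / (1 - (starRingEnd ℂ) z * ζ)‖ < r}

/-!
The Euclidean disc `B(z, R)` with `R = r (1 - |z|) / 2` lies in `Δ(z, r)`, and
`1 - |z|² ≤ 2 (1 - |z|)`, so it suffices to bound `(R |f'(z)|)^q` by the integral over `B(z, R)`.
Maximizing `(R - |w - z|) |f'(w)|` over the closed disc, as in the proof of Bloch's theorem, yields
a point `p` near which `f'` stays within half of `f'(p)`, with `|f'(p)|` at least comparable to
`|f'(z)|`. There `f` is injective on a small disc whose image contains a disc of radius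
`≍ R |f'(z)|`, and the change of variables `w = f(ζ)` turns `∫ |f|^{q-2} |f'|²` into
`∫ |w|^{q-2}` over that image, which is `≳ (R |f'(z)|)^q` because `q ≥ 2`.
-/

open scoped NNReal
open Real

theorem Complex.det_toSpanSingleton_restrictScalars (c : ℂ) :
    ((ContinuousLinearMap.toSpanSingleton ℂ c).restrictScalars ℝ).det = ‖c‖ ^ 2 := by
  simp [ContinuousLinearMap.det, LinearMap.det_restrictScalars, Algebra.norm_complex_eq,
    Complex.normSq_eq_norm_sq]

theorem Complex.lintegral_image_eq_lintegral_norm_deriv_sq_mul {s : Set ℂ} {f f' : ℂ → ℂ}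
    (hs : MeasurableSet s) (hf : ∀ x ∈ s, HasDerivWithinAt f (f' x) s x) (hinj : InjOn f s)
    (g : ℂ → ℝ≥0∞) :
    ∫⁻ x in f '' s, g x = ∫⁻ x in s, ENNReal.ofReal (‖f' x‖ ^ 2) * g (f x) := by
  simp_rw [lintegral_image_eq_lintegral_abs_det_fderiv_mul volume hs
    (fun x hx => (hf x hx).hasFDerivWithinAt.restrictScalars ℝ) hinj g,
    Complex.det_toSpanSingleton_restrictScalars, abs_sq]

theorem Complex.injOn_closedBall_and_closedBall_subset_image_of_norm_deriv_sub_le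
    {f f' : ℂ → ℂ} {p b : ℂ} {s : ℝ} (hs : 0 ≤ s) (hb : b ≠ 0)
    (hf : ∀ w ∈ closedBall p s, HasDerivWithinAt f (f' w) (closedBall p s) w)
    (hf' : ∀ w ∈ closedBall p s, ‖f' w - b‖ ≤ ‖b‖ / 2) :
    InjOn f (closedBall p s) ∧ closedBall (f p) (‖b‖ / 2 * s) ⊆ f '' closedBall p s := by
  obtain ⟨L, hL, hLsymm⟩ : ∃ L : ℂ ≃L[ℂ] ℂ,
      (L : ℂ →L[ℂ] ℂ) = ContinuousLinearMap.toSpanSingleton ℂ b ∧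
      (L.symm : ℂ →L[ℂ] ℂ) = ContinuousLinearMap.toSpanSingleton ℂ b⁻¹ :=
    ⟨ContinuousLinearEquiv.unitsEquivAut ℂ (Units.mk0 b hb), by ext; simp, by ext; simp⟩
  have happrox : ApproximatesLinearOn f (ContinuousLinearMap.toSpanSingleton ℂ b)
      (closedBall p s) (‖b‖₊ / 2) := by
    intro x hx y hy
    have hsub : ∀ w, ContinuousLinearMap.toSpanSingleton ℂ (f' w) -
        ContinuousLinearMap.toSpanSingleton ℂ b =
        ContinuousLinearMap.toSpanSingleton ℂ (f' w - b) := fun w => by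
      ext; simp
    simpa only [NNReal.coe_div, coe_nnnorm, NNReal.coe_ofNat] using
      (convex_closedBall p s).norm_image_sub_le_of_norm_hasFDerivWithin_le'
      (fun w hw => (hf w hw).hasFDerivWithinAt)
      (fun w hw => by rw [hsub, ContinuousLinearMap.norm_toSpanSingleton]; exact hf' w hw) hy hx
  rw [← hL] at happrox
  have hNsymm : ‖(L.symm : ℂ →L[ℂ] ℂ)‖₊⁻¹ = ‖b‖₊ := by
    ext; simp [hLsymm]
  refine ⟨happrox.injOn (Or.inr ?_), ?_⟩
  · rw [hNsymm]; exact NNReal.half_lt_self (nnnorm_ne_zero_iff.2 hb)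
  · refine SurjOn.mono subset_rfl (closedBall_subset_closedBall (le_of_eq ?_))
      (happrox.surjOn_closedBall_of_nonlinearRightInverse L.toNonlinearRightInverse hs subset_rfl)
    change _ = (‖(L.symm : ℂ →L[ℂ] ℂ)‖₊⁻¹ - ((‖b‖₊ / 2 : ℝ≥0) : ℝ)) * s
    rw [hNsymm]
    push_cast; ring

theorem exists_locally_doubling_point {X : Type*} [PseudoMetricSpace X] [ProperSpace X]
    {g : X → ℝ} {z : X} {R : ℝ} (hR : 0 < R) (hg : ContinuousOn g (closedBall z R))
    (hgz : 0 < g z) :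
    ∃ p, dist p z < R ∧ R * g z ≤ (R - dist p z) * g p ∧
      ∀ w ∈ ball p ((R - dist p z) / 2), g w ≤ 2 * g p := by
  obtain ⟨p, hp, hmax⟩ := (isCompact_closedBall z R).exists_isMaxOn
    (f := fun w => (R - dist w z) * g w) ⟨z, mem_closedBall_self hR.le⟩
    ((continuous_const.sub (continuous_id.dist continuous_const)).continuousOn.mul hg)
  have hzp : R * g z ≤ (R - dist p z) * g p := by
    simpa using hmax (mem_closedBall_self hR.le)
  have hpz : dist p z < R := by
    by_contra! h
    have hzero : R - dist p z = 0 := by linarith [mem_closedBall.1 hp]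
    rw [hzero, zero_mul] at hzp
    linarith [mul_pos hR hgz]
  have hgp : 0 < g p := by nlinarith [mul_pos hR hgz, dist_nonneg (x := p) (y := z)]
  refine ⟨p, hpz, hzp, fun w hw => ?_⟩
  have hwz := dist_triangle w p z
  have hw' : (R - dist w z) * g w ≤ (R - dist p z) * g p :=
    hmax (mem_closedBall.2 (by linarith [mem_ball.1 hw]))
  rcases le_or_gt (g w) 0 with h | h
  · linarith
  · nlinarith [mem_ball.1 hw]

theorem norm_sub_le_half_of_norm_le_two_mul {g : ℂ → ℂ} {p : ℂ} {ρ : ℝ} (hρ : 0 < ρ)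
    (hg : DifferentiableOn ℂ g (ball p ρ)) (hbound : ∀ w ∈ ball p ρ, ‖g w‖ ≤ 2 * ‖g p‖) :
    ∀ w ∈ closedBall p (ρ / 6), ‖g w - g p‖ ≤ ‖g p‖ / 2 := by
  intro w hw
  have hmaps : MapsTo g (ball p ρ) (closedBall (g p) (3 * ‖g p‖)) := fun v hv => by
    rw [mem_closedBall, dist_eq_norm]
    linarith [norm_sub_le (g v) (g p), hbound v hv]
  have hwp : dist w p ≤ ρ / 6 := mem_closedBall.1 hw
  calc ‖g w - g p‖ = dist (g w) (g p) := (dist_eq_norm _ _).symm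
    _ ≤ 3 * ‖g p‖ / ρ * dist w p := Complex.dist_le_div_mul_dist_of_mapsTo_ball hg hmaps
        (mem_ball.2 (by linarith))
    _ ≤ 3 * ‖g p‖ / ρ * (ρ / 6) := by gcongr
    _ = ‖g p‖ / 2 := by field_simp; ring

theorem exists_injOn_closedBall_and_ball_subset_image {f : ℂ → ℂ} {U : Set ℂ} (hU : IsOpen U)
    (hf : DifferentiableOn ℂ f U) {z : ℂ} {R : ℝ} (hR : 0 < R) (hzR : closedBall z R ⊆ U) :
    ∃ p s, closedBall p s ⊆ ball z R ∧ InjOn f (closedBall p s) ∧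
      ball (f p) (R * ‖deriv f z‖ / 24) ⊆ f '' closedBall p s := by
  rcases eq_or_ne (deriv f z) 0 with hz | hz
  · exact ⟨z, 0, by simpa using hR, by simp, by simp [hz]⟩
  have hf' : DifferentiableOn ℂ (deriv f) U := (hf.analyticOnNhd hU).deriv.differentiableOn
  obtain ⟨p, hpz, hzp, hdouble⟩ := exists_locally_doubling_point hR
    (hf'.continuousOn.mono hzR).norm (norm_pos_iff.2 hz)
  set ρ := (R - dist p z) / 2 with hρ_def
  have hρ : 0 < ρ := by linarith
  have hpρ : ball p ρ ⊆ ball z R := ball_subset_ball' (by linarith)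
  have hρU : ball p ρ ⊆ U := hpρ.trans (ball_subset_closedBall.trans hzR)
  have hsub : closedBall p (ρ / 6) ⊆ ball p ρ := closedBall_subset_ball (by linarith)
  have hp : deriv f p ≠ 0 := by
    rintro hp
    rw [hp, norm_zero, mul_zero] at hzp
    exact (mul_pos hR (norm_pos_iff.2 hz)).not_ge hzp
  obtain ⟨hinj, himage⟩ :=
    injOn_closedBall_and_closedBall_subset_image_of_norm_deriv_sub_le (by positivity) hp
    (fun w hw => (hf.differentiableAt (hU.mem_nhds (hρU (hsub hw)))).hasDerivAt.hasDerivWithinAt)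
    (norm_sub_le_half_of_norm_le_two_mul hρ (hf'.mono hρU) hdouble)
  refine ⟨p, ρ / 6, hsub.trans hpρ, hinj,
    (ball_subset_closedBall.trans (closedBall_subset_closedBall ?_)).trans himage⟩
  calc R * ‖deriv f z‖ / 24 ≤ (R - dist p z) * ‖deriv f p‖ / 24 := by linarith
    _ = ‖deriv f p‖ / 2 * (ρ / 6) := by ring

theorem exists_ball_subset_ball_forall_le_norm {E : Type*} [NormedAddCommGroup E]
    [NormedSpace ℝ E] [Nontrivial E] (w₀ : E) {t : ℝ} (ht : 0 ≤ t) :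
    ∃ ζ₁, ball ζ₁ (t / 4) ⊆ ball w₀ t ∧ ∀ ζ ∈ ball ζ₁ (t / 4), t / 4 ≤ ‖ζ‖ := by
  obtain ⟨v, hv⟩ := exists_norm_eq E (by positivity : 0 ≤ t / 2)
  obtain ⟨u, hu, hwu⟩ : ∃ u, ‖u‖ = t / 2 ∧ t / 2 ≤ ‖w₀ + u‖ := by
    have := norm_sub_le (w₀ + v) (w₀ - v)
    rw [add_sub_sub_cancel, ← two_smul ℝ v, norm_smul, hv, Real.norm_two] at this
    by_cases h : t / 2 ≤ ‖w₀ + v‖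
    · exact ⟨v, hv, h⟩
    · exact ⟨-v, by rw [norm_neg, hv], by rw [← sub_eq_add_neg]; linarith⟩
  refine ⟨w₀ + u, ball_subset_ball' ?_, fun ζ hζ => ?_⟩
  · rw [dist_eq_norm, add_sub_cancel_left, hu]; linarith
  · linarith [norm_sub_norm_le (w₀ + u) ζ, mem_ball'.1 hζ, dist_eq_norm (w₀ + u) ζ]

theorem ofReal_mul_pi_le_lintegral_ball_rpow_norm {a t : ℝ} (ha : 0 ≤ a) (ht : 0 ≤ t)
    (w₀ : ℂ) :
    ENNReal.ofReal ((t / 4) ^ (a + 2) * π) ≤ ∫⁻ ζ in ball w₀ t, ENNReal.ofReal (‖ζ‖ ^ a) := by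
  obtain ⟨ζ₁, hsub, hnorm⟩ := exists_ball_subset_ball_forall_le_norm w₀ ht
  calc ENNReal.ofReal ((t / 4) ^ (a + 2) * π)
      = ENNReal.ofReal ((t / 4) ^ a) * volume (ball ζ₁ (t / 4)) := by
        rw [Complex.volume_ball, ← ENNReal.ofReal_pow (by positivity), ← ENNReal.ofReal_coe_nnreal,
          NNReal.coe_real_pi, ← ENNReal.ofReal_mul (by positivity),
          ← ENNReal.ofReal_mul (by positivity), Real.rpow_add' (by positivity) (by positivity),
          Real.rpow_two, mul_assoc]
    _ = ∫⁻ _ in ball ζ₁ (t / 4), ENNReal.ofReal ((t / 4) ^ a) := (setLIntegral_const _ _).symm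
    _ ≤ ∫⁻ ζ in ball ζ₁ (t / 4), ENNReal.ofReal (‖ζ‖ ^ a) :=
        setLIntegral_mono (by fun_prop) fun ζ hζ =>
          ENNReal.ofReal_le_ofReal (Real.rpow_le_rpow (by positivity) (hnorm ζ hζ) ha)
    _ ≤ ∫⁻ ζ in ball w₀ t, ENNReal.ofReal (‖ζ‖ ^ a) := lintegral_mono_set hsub

theorem ofReal_le_lintegral_ball_rpow_norm_mul_norm_deriv_sq {f : ℂ → ℂ} {U : Set ℂ}
    (hU : IsOpen U) (hf : DifferentiableOn ℂ f U) {z : ℂ} {R : ℝ} (hR : 0 < R)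
    (hzR : closedBall z R ⊆ U) {a : ℝ} (ha : 0 ≤ a) :
    ENNReal.ofReal ((R * ‖deriv f z‖ / 96) ^ (a + 2) * π) ≤
      ∫⁻ ζ in ball z R, ENNReal.ofReal (‖f ζ‖ ^ a * ‖deriv f ζ‖ ^ 2) := by
  obtain ⟨p, s, hsub, hinj, himage⟩ := exists_injOn_closedBall_and_ball_subset_image hU hf hR hzR
  have hderiv : ∀ w ∈ closedBall p s, HasDerivWithinAt f (deriv f w) (closedBall p s) w :=
    fun w hw => (hf.differentiableAt (hU.mem_nhds (hzR (ball_subset_closedBall (hsub hw)))))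
      |>.hasDerivAt.hasDerivWithinAt
  calc ENNReal.ofReal ((R * ‖deriv f z‖ / 96) ^ (a + 2) * π)
      = ENNReal.ofReal ((R * ‖deriv f z‖ / 24 / 4) ^ (a + 2) * π) := by ring_nf
    _ ≤ ∫⁻ ζ in ball (f p) (R * ‖deriv f z‖ / 24), ENNReal.ofReal (‖ζ‖ ^ a) :=
        ofReal_mul_pi_le_lintegral_ball_rpow_norm ha (by positivity) _
    _ ≤ ∫⁻ ζ in f '' closedBall p s, ENNReal.ofReal (‖ζ‖ ^ a) := lintegral_mono_set himage
    _ = ∫⁻ w in closedBall p s, ENNReal.ofReal (‖deriv f w‖ ^ 2) * ENNReal.ofReal (‖f w‖ ^ a) :=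
        lintegral_image_eq_lintegral_norm_deriv_sq_mul measurableSet_closedBall hderiv hinj _
    _ = ∫⁻ w in closedBall p s, ENNReal.ofReal (‖f w‖ ^ a * ‖deriv f w‖ ^ 2) := by
        simp_rw [← ENNReal.ofReal_mul (sq_nonneg _), mul_comm]
    _ ≤ ∫⁻ ζ in ball z R, ENNReal.ofReal (‖f ζ‖ ^ a * ‖deriv f ζ‖ ^ 2) :=
        lintegral_mono_set hsub

theorem one_sub_norm_le_norm_one_sub_conj_mul {z ζ : ℂ} (hz : ‖z‖ ≤ 1) :
    1 - ‖ζ‖ ≤ ‖1 - starRingEnd ℂ z * ζ‖ := by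
  have hmul : ‖starRingEnd ℂ z * ζ‖ ≤ ‖ζ‖ := by
    rw [norm_mul, Complex.norm_conj]; exact mul_le_of_le_one_left (norm_nonneg _) hz
  linarith [norm_sub_norm_le 1 (starRingEnd ℂ z * ζ), norm_one (α := ℂ)]

theorem ball_subset_phDisc {z : ℂ} (hz : ‖z‖ < 1) {r : ℝ} (hr0 : 0 < r) (hr1 : r < 1) :
    ball z (r / 2 * (1 - ‖z‖)) ⊆ phDisc z r := by
  intro ζ hζ
  have hζz : ‖z - ζ‖ < r / 2 * (1 - ‖z‖) := by
    rw [← dist_eq_norm]; exact mem_ball'.1 hζ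
  have hζ : ‖ζ‖ < 1 - (1 - ‖z‖) * (1 - r / 2) := by
    nlinarith [norm_le_norm_add_norm_sub' ζ z, norm_sub_rev z ζ]
  have hden := one_sub_norm_le_norm_one_sub_conj_mul (ζ := ζ) hz.le
  refine ⟨by nlinarith, ?_⟩
  rw [norm_div, div_lt_iff₀ (by nlinarith)]
  calc ‖z - ζ‖ < r / 2 * (1 - ‖z‖) := hζz
    _ ≤ r * ((1 - ‖z‖) * (1 - r / 2)) := by
        nlinarith [mul_pos (mul_pos hr0 (sub_pos.2 hz)) (sub_pos.2 hr1)]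
    _ ≤ r * ‖1 - (starRingEnd ℂ) z * ζ‖ := by gcongr; linarith

theorem rpow_mul_one_sub_sq_rpow_le {A x q : ℝ} (hA : 0 ≤ A) (hx0 : 0 ≤ x) (hx1 : x ≤ 1)
    (hq : 0 ≤ q) : A ^ q * (1 - x ^ 2) ^ q ≤ (2 * (1 - x) * A) ^ q := by
  rw [← Real.mul_rpow hA (by nlinarith)]
  exact Real.rpow_le_rpow (mul_nonneg hA (by nlinarith)) (by
    nlinarith [mul_nonneg hA (mul_nonneg (sub_nonneg.2 hx1) (sub_nonneg.2 hx1))]) hq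

theorem ofReal_norm_deriv_rpow_mul_le_lintegral_ball {f : ℂ → ℂ}
    (hf : DifferentiableOn ℂ f (ball 0 1)) {z : ℂ} (hz : ‖z‖ < 1) {r : ℝ} (hr0 : 0 < r)
    (hr1 : r < 1) {q : ℝ} (hq : 2 ≤ q) :
    ENNReal.ofReal (‖deriv f z‖ ^ q * (1 - ‖z‖ ^ 2) ^ q) ≤ ENNReal.ofReal ((384 / r) ^ q / π) *
      ∫⁻ ζ in ball z (r / 2 * (1 - ‖z‖)), ENNReal.ofReal (‖f ζ‖ ^ (q - 2) * ‖deriv f ζ‖ ^ 2) := by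
  set R := r / 2 * (1 - ‖z‖) with hR_def
  have hR : 0 < R := by have := sub_pos.2 hz; positivity
  have hzR : closedBall z R ⊆ ball 0 1 :=
    closedBall_subset_ball' (by rw [dist_zero_right]; nlinarith [hR_def])
  have hweight : ‖deriv f z‖ ^ q * (1 - ‖z‖ ^ 2) ^ q ≤
      (384 / r) ^ q / π * ((R * ‖deriv f z‖ / 96) ^ (q - 2 + 2) * π) :=
    calc ‖deriv f z‖ ^ q * (1 - ‖z‖ ^ 2) ^ q ≤ (2 * (1 - ‖z‖) * ‖deriv f z‖) ^ q :=
          rpow_mul_one_sub_sq_rpow_le (norm_nonneg _) (norm_nonneg _) hz.le (by linarith)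
      _ = (384 / r * (R * ‖deriv f z‖ / 96)) ^ q := by congr 1; field_simp; ring
      _ = _ := by
          rw [Real.mul_rpow (by positivity) (by positivity), sub_add_cancel]
          field_simp
  calc ENNReal.ofReal (‖deriv f z‖ ^ q * (1 - ‖z‖ ^ 2) ^ q)
      ≤ ENNReal.ofReal ((384 / r) ^ q / π) *
          ENNReal.ofReal ((R * ‖deriv f z‖ / 96) ^ (q - 2 + 2) * π) := by
        rw [← ENNReal.ofReal_mul (by positivity)]
        exact ENNReal.ofReal_le_ofReal hweight
    _ ≤ _ := by
        gcongr
        exact ofReal_le_lintegral_ball_rpow_norm_mul_norm_deriv_sq isOpen_ball hf hR hzR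
          (by linarith)

/-- For f analytic and q ≥ 2,
|f'(z)|^q (1-|z|²)^q ≲ ∫_{Δ(z,r)} Δ|f|^q dA, where Δ|f|^q = q²|f|^{q-2}|f'|². -/
theorem stmt9 (q : ℝ) (hq : 2 ≤ q) (r : ℝ) (hr0 : 0 < r) (hr1 : r < 1) :
    ∃ c : ℝ, 0 < c ∧ ∀ f : ℂ → ℂ, DifferentiableOn ℂ f (Metric.ball 0 1) →
      ∀ z ∈ Metric.ball (0:ℂ) 1,
        ENNReal.ofReal (‖deriv f z‖ ^ q * (1 - ‖z‖ ^ 2) ^ q) ≤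
          ENNReal.ofReal c *
            ∫⁻ ζ in phDisc z r,
              ENNReal.ofReal (q ^ 2 * ‖f ζ‖ ^ (q - 2) * ‖deriv f ζ‖ ^ (2:ℝ)) := by
  refine ⟨(384 / r) ^ q / π / q ^ 2, by positivity, fun f hf z hz => ?_⟩
  have hz1 : ‖z‖ < 1 := mem_ball_zero_iff.1 hz
  calc ENNReal.ofReal (‖deriv f z‖ ^ q * (1 - ‖z‖ ^ 2) ^ q)
      ≤ ENNReal.ofReal ((384 / r) ^ q / π) * ∫⁻ ζ in ball z (r / 2 * (1 - ‖z‖)),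
          ENNReal.ofReal (‖f ζ‖ ^ (q - 2) * ‖deriv f ζ‖ ^ 2) :=
        ofReal_norm_deriv_rpow_mul_le_lintegral_ball hf hz1 hr0 hr1 hq
    _ = ENNReal.ofReal ((384 / r) ^ q / π / q ^ 2) * ∫⁻ ζ in ball z (r / 2 * (1 - ‖z‖)),
          ENNReal.ofReal (q ^ 2 * ‖f ζ‖ ^ (q - 2) * ‖deriv f ζ‖ ^ (2:ℝ)) := by
        simp_rw [← lintegral_const_mul' _ _ ENNReal.ofReal_ne_top,
          ← ENNReal.ofReal_mul (by positivity : (0:ℝ) ≤ (384 / r) ^ q / π),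
          ← ENNReal.ofReal_mul (by positivity : (0:ℝ) ≤ (384 / r) ^ q / π / q ^ 2), Real.rpow_two]
        congr 1 with ζ
        field_simp
    _ ≤ _ := by
        gcongr
        exact ball_subset_phDisc hz1 hr0 hr1
end
end

section
/- Let 0 < q < ∞, and let (φ_k)_{k∈ℕ} be nonnegative functions on a set X such that for each ζ ∈ X only finitely many φ_k(ζ) are nonzero. Define recursively k₁(ζ) = min{k : φ_k(ζ) > 0} and k_{j+1}(ζ) = min{k : φ_k(ζ) > 2φ_{k_j(ζ)}(ζ)}, and let φ̃_k(ζ) = φ_k(ζ) if k ∈ {k_j(ζ)} and 0 otherwise. Then (i) max_k φ̃_k(ζ) ≤ (Σ_k φ̃_k(ζ)^q)^{1/q} ≤ C(q)·max_k φ̃_k(ζ), and (ii) max_k φ̃_k(ζ) ≤ max_k φ_k(ζ) ≤ 2·max_k φ̃_k(ζ), for every ζ ∈ X. -/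
/-!
Each selected value exceeds twice the previous one, so the running maximum `runMax φ n` (the last
selected value) satisfies `runMax^q ≤ 2^{-q} φ_n^q` whenever `n` is selected. By induction the
`q`-th powers of the selected values before `n` sum to at most `runMax φ n ^ q / (1 - 2^{-q})`,
a geometric-series bound. For (ii), an unselected `φ_k` is at most twice the running maximum.
-/

open scoped Classical

noncomputable section

/-- Running maximum of the selected (stopping) values: `runMax φ k` is the value of the
last selected index before `k` (0 if none). An index `k` is selected iff
`φ k > 2 * runMax φ k`; this realizes Luecking's stopping sequence k₁ < k₂ < …,
where k₁ = min{k : φ_k > 0} and k_{j+1} = min{k : φ_k > 2 φ_{k_j}}. -/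
def runMax (φ : ℕ → ℝ) : ℕ → ℝ
  | 0 => 0
  | k + 1 => if 2 * runMax φ k < φ k then φ k else runMax φ k

/-- The stopped sequence φ̃: equal to φ_k at selected indices, 0 otherwise. -/
def stopped (φ : ℕ → ℝ) (k : ℕ) : ℝ :=
  if 2 * runMax φ k < φ k then φ k else 0

open Function Set

theorem bddAbove_range_of_finite_support {ι : Type*} {f : ι → ℝ} (hf : (support f).Finite) :
    BddAbove (range f) :=
  ((hf.image f).insert 0).bddAbove.mono (range_subset_insert_image_support f)

theorem le_rpow_tsum_rpow_one_div {ι : Type*} {f : ι → ℝ} (hf : ∀ i, 0 ≤ f i) {q : ℝ}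
    (hq : 0 < q) (hsum : Summable fun i => f i ^ q) (i : ι) :
    f i ≤ (∑' j, f j ^ q) ^ (1 / q) :=
  calc f i = (f i ^ q) ^ (1 / q) := by rw [one_div, Real.rpow_rpow_inv (hf i) hq.ne']
    _ ≤ (∑' j, f j ^ q) ^ (1 / q) := Real.rpow_le_rpow (Real.rpow_nonneg (hf i) q)
      (hsum.le_tsum i fun j _ => Real.rpow_nonneg (hf j) q) (one_div_nonneg.2 hq.le)

theorem one_sub_two_rpow_neg_pos {q : ℝ} (hq : 0 < q) : 0 < 1 - (2 : ℝ) ^ (-q) :=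
  sub_pos.2 (Real.rpow_lt_one_of_one_lt_of_neg one_lt_two (neg_neg_of_pos hq))

section Stopping

variable {φ : ℕ → ℝ} {k : ℕ}

theorem stopped_of_lt (h : 2 * runMax φ k < φ k) : stopped φ k = φ k := if_pos h

theorem stopped_of_le (h : φ k ≤ 2 * runMax φ k) : stopped φ k = 0 := if_neg h.not_gt

theorem runMax_succ_of_lt (h : 2 * runMax φ k < φ k) : runMax φ (k + 1) = φ k := if_pos h

theorem runMax_succ_of_le (h : φ k ≤ 2 * runMax φ k) : runMax φ (k + 1) = runMax φ k :=
  if_neg h.not_gt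

theorem support_stopped_subset : support (stopped φ) ⊆ support φ := fun k hk h0 =>
  hk (by simp only [stopped, h0, ite_self])

variable (hφ : ∀ k, 0 ≤ φ k)
include hφ

theorem runMax_nonneg (k : ℕ) : 0 ≤ runMax φ k := by
  induction k with
  | zero => exact le_rfl
  | succ n ih =>
    rcases lt_or_ge (2 * runMax φ n) (φ n) with h | h
    · exact (runMax_succ_of_lt h).symm ▸ hφ n
    · exact (runMax_succ_of_le h).symm ▸ ih

theorem stopped_nonneg (k : ℕ) : 0 ≤ stopped φ k := by
  unfold stopped; split_ifs <;> simp [hφ k]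

theorem stopped_le (k : ℕ) : stopped φ k ≤ φ k := by
  unfold stopped; split_ifs <;> simp [hφ k]

theorem runMax_le_ciSup_stopped (hb : BddAbove (range (stopped φ))) (k : ℕ) :
    runMax φ k ≤ ⨆ j, stopped φ j := by
  induction k with
  | zero => exact Real.iSup_nonneg (stopped_nonneg hφ)
  | succ n ih =>
    rcases lt_or_ge (2 * runMax φ n) (φ n) with h | h
    · rw [runMax_succ_of_lt h, ← stopped_of_lt h]
      exact le_ciSup hb n
    · rwa [runMax_succ_of_le h]

theorem le_two_mul_ciSup_stopped (hb : BddAbove (range (stopped φ))) (k : ℕ) :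
    φ k ≤ 2 * ⨆ j, stopped φ j := by
  have hS : 0 ≤ ⨆ j, stopped φ j := Real.iSup_nonneg (stopped_nonneg hφ)
  rcases lt_or_ge (2 * runMax φ k) (φ k) with h | h
  · have := le_ciSup hb k
    rw [stopped_of_lt h] at this
    linarith
  · exact h.trans (by gcongr; exact runMax_le_ciSup_stopped hφ hb k)

variable {q : ℝ} (hq : 0 < q)
include hq

theorem runMax_rpow_le_of_lt (h : 2 * runMax φ k < φ k) :
    runMax φ k ^ q ≤ 2 ^ (-q) * φ k ^ q :=
  calc runMax φ k ^ q ≤ (2⁻¹ * φ k) ^ q := by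
        gcongr
        · exact runMax_nonneg hφ k
        · linarith
    _ = 2 ^ (-q) * φ k ^ q := by
        rw [Real.mul_rpow (by norm_num) (hφ k), Real.rpow_neg zero_le_two, Real.inv_rpow zero_le_two]

theorem sum_range_stopped_rpow_le (n : ℕ) :
    ∑ k ∈ Finset.range n, stopped φ k ^ q ≤ runMax φ n ^ q / (1 - 2 ^ (-q)) := by
  have hc := one_sub_two_rpow_neg_pos hq
  induction n with
  | zero => simp [runMax, Real.zero_rpow hq.ne']
  | succ n ih =>
    rw [Finset.sum_range_succ]
    rcases lt_or_ge (2 * runMax φ n) (φ n) with h | h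
    · rw [stopped_of_lt h, runMax_succ_of_lt h]
      have hgeom := runMax_rpow_le_of_lt hφ hq h
      calc _ ≤ runMax φ n ^ q / (1 - 2 ^ (-q)) + φ n ^ q := by gcongr
        _ ≤ 2 ^ (-q) * φ n ^ q / (1 - 2 ^ (-q)) + φ n ^ q := by gcongr
        _ = φ n ^ q / (1 - 2 ^ (-q)) := by field_simp; ring
    · rwa [stopped_of_le h, runMax_succ_of_le h, Real.zero_rpow hq.ne', add_zero]

theorem tsum_stopped_rpow_le (hfin : (support φ).Finite) :
    ∑' k, stopped φ k ^ q ≤ (⨆ k, stopped φ k) ^ q / (1 - 2 ^ (-q)) := by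
  have hc := one_sub_two_rpow_neg_pos hq
  obtain ⟨M, hM⟩ := hfin.bddAbove
  have hvanish : ∀ k ∉ Finset.range (M + 1), stopped φ k ^ q = 0 := fun k hk => by
    have : k ∉ support (stopped φ) := fun h =>
      hk (Finset.mem_range.2 (Nat.lt_succ_of_le (hM (support_stopped_subset h))))
    rw [notMem_support.1 this, Real.zero_rpow hq.ne']
  rw [tsum_eq_sum hvanish]
  refine (sum_range_stopped_rpow_le hφ hq _).trans ?_
  gcongr
  · exact runMax_nonneg hφ _
  · exact runMax_le_ciSup_stopped hφ
      (bddAbove_range_of_finite_support (hfin.subset support_stopped_subset)) _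

end Stopping

/-- Luecking's stopping-sequence lemma: with φ̃ the stopped sequence,
(i) max_k φ̃_k ≤ (Σ_k φ̃_k^q)^{1/q} ≤ (1-2^{-q})^{-1/q}·max_k φ̃_k and
(ii) max_k φ̃_k ≤ max_k φ_k ≤ 2·max_k φ̃_k. -/
theorem stmt13 {X : Type*} (φ : ℕ → X → ℝ) (hnn : ∀ k ζ, 0 ≤ φ k ζ)
    (hfin : ∀ ζ, {k : ℕ | φ k ζ ≠ 0}.Finite) (q : ℝ) (hq : 0 < q) :
    ∀ ζ : X,
      ((⨆ k, stopped (fun j => φ j ζ) k) ≤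
          (∑' k, stopped (fun j => φ j ζ) k ^ q) ^ (1 / q) ∧
        (∑' k, stopped (fun j => φ j ζ) k ^ q) ^ (1 / q) ≤
          (1 - (2:ℝ) ^ (-q)) ^ (-(1 / q)) * ⨆ k, stopped (fun j => φ j ζ) k) ∧
      ((⨆ k, stopped (fun j => φ j ζ) k) ≤ (⨆ k, φ k ζ) ∧
        (⨆ k, φ k ζ) ≤ 2 * ⨆ k, stopped (fun j => φ j ζ) k) := by
  intro ζ
  set ψ : ℕ → ℝ := fun j => φ j ζ
  have hψ : ∀ k, 0 ≤ ψ k := fun k => hnn k ζ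
  have hsupp : (support ψ).Finite := hfin ζ
  have hb : BddAbove (range (stopped ψ)) :=
    bddAbove_range_of_finite_support (hsupp.subset support_stopped_subset)
  have hsum : Summable fun k => stopped ψ k ^ q :=
    summable_of_hasFiniteSupport <| hsupp.subset <|
      (support_comp_subset (g := (· ^ q)) (Real.zero_rpow hq.ne') _).trans support_stopped_subset
  refine ⟨⟨ciSup_le (le_rpow_tsum_rpow_one_div (stopped_nonneg hψ) hq hsum), ?_⟩,
    ciSup_le fun k => (stopped_le hψ k).trans (le_ciSup (bddAbove_range_of_finite_support hsupp) k),
    ciSup_le (le_two_mul_ciSup_stopped hψ hb)⟩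
  have hc := one_sub_two_rpow_neg_pos hq
  have hS : 0 ≤ ⨆ k, stopped ψ k := Real.iSup_nonneg (stopped_nonneg hψ)
  calc (∑' k, stopped ψ k ^ q) ^ (1 / q)
      ≤ ((⨆ k, stopped ψ k) ^ q / (1 - 2 ^ (-q))) ^ (1 / q) := by
        gcongr
        · exact tsum_nonneg fun k => Real.rpow_nonneg (stopped_nonneg hψ k) q
        · exact tsum_stopped_rpow_le hψ hq hsupp
    _ = (1 - 2 ^ (-q)) ^ (-(1 / q)) * ⨆ k, stopped ψ k := by
        rw [Real.div_rpow (Real.rpow_nonneg hS q) hc.le, one_div, Real.rpow_rpow_inv hS hq.ne',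
          Real.rpow_neg hc.le, div_eq_mul_inv, mul_comm]
end
end
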